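/- Let b = 5, let d ≥ 3 and 0 < σ < 1 satisfy 4b²σ/(1−σ²) ≤ 1/2, let 2 ≤ r ≤ b, and let I_1,…,I_r be distinct two-element subsets of [d] such that there exists j ∈ [d] with j ∈ I_r and j ∉ I_1 ∪ ⋯ ∪ I_{r−1}. Then ∫_{ℝ^d} η_0(x)·∏_{i=1}^r (η_{I_i,σ}(x)/η_0(x) − 1) dx = 0. -/

import Mathlib

open Finset Matrix MeasureTheory

noncomputable section

/-- The `d×d` matrix with unit diagonal, entries `σ` in positions `(i,j)` and `(j,i)`
for `I = {i,j}`, and `0` elsewhere. -/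
def SigmaM (d : ℕ) (σ : ℝ) (I : Finset (Fin d)) : Matrix (Fin d) (Fin d) ℝ :=
  Matrix.of fun a b => if a = b then 1 else if ({a, b} : Finset (Fin d)) = I then σ else 0

/-- Density of the centered Gaussian on `ℝ^d` with covariance matrix `Sm`. -/
def gdens (d : ℕ) (Sm : Matrix (Fin d) (Fin d) ℝ) (x : Fin d → ℝ) : ℝ :=
  (2 * Real.pi) ^ (-(d : ℝ)/2) * Sm.det ^ (-(1 : ℝ)/2) *
    Real.exp (-(x ⬝ᵥ Sm⁻¹.mulVec x) / 2)

/-- Density of the standard Gaussian on `ℝ^d`. -/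
def g0dens (d : ℕ) (x : Fin d → ℝ) : ℝ :=
  (2 * Real.pi) ^ (-(d : ℝ)/2) * Real.exp (-(∑ i, x i ^ 2) / 2)

/- ### Auxiliary lemmas -/

lemma fpair_eq {α : Type*} [DecidableEq α] {p q a b : α} (hpq : p ≠ q) :
    ({p, q} : Finset α) = {a, b} ↔ (p = a ∧ q = b) ∨ (p = b ∧ q = a) := by
  constructor
  · intro h
    have hp : p ∈ ({a, b} : Finset α) := h ▸ Finset.mem_insert_self p {q}
    have hq : q ∈ ({a, b} : Finset α) := h ▸ Finset.mem_insert_of_mem (Finset.mem_singleton_self q)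
    simp only [Finset.mem_insert, Finset.mem_singleton] at hp hq
    rcases hp with rfl | rfl <;> rcases hq with h' | h' <;> first | (exact absurd h'.symm hpq) | tauto
  · rintro (⟨rfl, rfl⟩ | ⟨rfl, rfl⟩)
    · rfl
    · exact Finset.pair_comm p q

lemma sigmaM_eq {d : ℕ} {σ : ℝ} {i j : Fin d} (hij : i ≠ j) :
    SigmaM d σ {i, j} = 1 + σ • (Matrix.single i j 1 + Matrix.single j i 1) := by
  ext a b
  simp only [SigmaM, of_apply, Matrix.add_apply, Matrix.smul_apply, Matrix.one_apply,
    Matrix.single, of_apply, smul_eq_mul]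
  by_cases hab : a = b
  · subst hab
    have h1 : ¬(i = a ∧ j = a) := by rintro ⟨rfl, rfl⟩; exact hij rfl
    have h2 : ¬(j = a ∧ i = a) := by rintro ⟨rfl, rfl⟩; exact hij rfl
    simp [h1, h2]
  · rw [if_neg hab, if_neg hab]
    by_cases hc : ({a, b} : Finset (Fin d)) = {i, j}
    · rw [if_pos hc]
      rcases (fpair_eq hab).1 hc with ⟨rfl, rfl⟩ | ⟨rfl, rfl⟩ <;>
        simp [hij, Ne.symm hij]
    · rw [if_neg hc]
      have h1 : ¬(i = a ∧ j = b) := fun ⟨h, h'⟩ => hc ((fpair_eq hab).2 (Or.inl ⟨h.symm, h'.symm⟩))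
      have h2 : ¬(j = a ∧ i = b) := fun ⟨h, h'⟩ => hc ((fpair_eq hab).2 (Or.inr ⟨h.symm, h'.symm⟩))
      simp [h1, h2]

lemma sigmaM_det {d : ℕ} {σ : ℝ} {i j : Fin d} (hij : i ≠ j) :
    (SigmaM d σ {i, j}).det = 1 - σ^2 := by
  have hD : (1 + (-σ^2) • Matrix.single j j (1:ℝ)) =
      Matrix.diagonal (Function.update (fun _ : Fin d => (1:ℝ)) j (1 - σ^2)) := by
    ext a b
    rcases eq_or_ne a b with rfl | hab
    · rcases eq_or_ne a j with rfl | haj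
      · simp [Matrix.one_apply, Matrix.single]; ring
      · simp [Matrix.one_apply, Matrix.single, Ne.symm haj, Function.update, haj]
    · have hja : ¬(j = a ∧ j = b) := by rintro ⟨rfl, rfl⟩; exact hab rfl
      simp [Matrix.one_apply, hab, Matrix.single, hja, Matrix.diagonal_apply_ne _ hab]
  have hfac : SigmaM d σ {i, j} =
      transvection j i σ * ((1 + (-σ^2) • Matrix.single j j (1:ℝ)) * transvection i j σ) := by
    rw [sigmaM_eq hij]
    have e1 : ∀ c e : ℝ, Matrix.single j i c * Matrix.single j j e = (0 : Matrix (Fin d) (Fin d) ℝ) :=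
      fun c e => Matrix.single_mul_single_of_ne _ _ _ _ hij _
    have e2 : ∀ c e : ℝ, Matrix.single j j c * Matrix.single i j e = (0 : Matrix (Fin d) (Fin d) ℝ) :=
      fun c e => Matrix.single_mul_single_of_ne _ _ _ _ hij.symm _
    have e3 : ∀ c e : ℝ, Matrix.single j i c * Matrix.single i j e = Matrix.single j j (c * e) :=
      fun c e => Matrix.single_mul_single_same _ _ _ _ _
    simp only [transvection, Matrix.mul_add, Matrix.add_mul, Matrix.mul_one, Matrix.one_mul,
      Matrix.mul_smul, Matrix.smul_mul, e1, e2, e3, smul_zero, add_zero, mul_zero, zero_mul,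
      mul_one]
    have f1 : Matrix.single j i σ = σ • Matrix.single j i (1:ℝ) := by
      rw [Matrix.smul_single, smul_eq_mul, mul_one]
    have f2 : Matrix.single i j σ = σ • Matrix.single i j (1:ℝ) := by
      rw [Matrix.smul_single, smul_eq_mul, mul_one]
    have f3 : Matrix.single j j (σ * σ) = (σ * σ) • Matrix.single j j (1:ℝ) := by
      rw [Matrix.smul_single, smul_eq_mul, mul_one]
    rw [f1, f2, f3]
    module
  rw [hfac, Matrix.det_mul, Matrix.det_mul, Matrix.det_transvection_of_ne _ _ hij.symm,
    Matrix.det_transvection_of_ne _ _ hij, hD, Matrix.det_diagonal,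
    ← Finset.mul_prod_erase _ _ (Finset.mem_univ j)]
  simp [Function.update]

lemma sigmaM_inv {d : ℕ} {σ : ℝ} {i j : Fin d} (hij : i ≠ j) (hσ : 1 - σ^2 ≠ 0) :
    (SigmaM d σ {i, j})⁻¹ = 1 + (σ^2/(1-σ^2)) • (Matrix.single i i (1:ℝ) + Matrix.single j j 1)
      + (-σ/(1-σ^2)) • (Matrix.single i j (1:ℝ) + Matrix.single j i 1) := by
  apply Matrix.inv_eq_right_inv
  rw [sigmaM_eq hij]
  have g1 : Matrix.single i j (1:ℝ) * Matrix.single j i (1:ℝ)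
      = (Matrix.single i i (1:ℝ) : Matrix (Fin d) (Fin d) ℝ) := by
    rw [Matrix.single_mul_single_same]; norm_num
  have g2 : Matrix.single j i (1:ℝ) * Matrix.single i j (1:ℝ)
      = (Matrix.single j j (1:ℝ) : Matrix (Fin d) (Fin d) ℝ) := by
    rw [Matrix.single_mul_single_same]; norm_num
  have g3 : Matrix.single i j (1:ℝ) * Matrix.single j j (1:ℝ)
      = (Matrix.single i j (1:ℝ) : Matrix (Fin d) (Fin d) ℝ) := by
    rw [Matrix.single_mul_single_same]; norm_num
  have g4 : Matrix.single j i (1:ℝ) * Matrix.single i i (1:ℝ)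
      = (Matrix.single j i (1:ℝ) : Matrix (Fin d) (Fin d) ℝ) := by
    rw [Matrix.single_mul_single_same]; norm_num
  have z1 : Matrix.single i j (1:ℝ) * Matrix.single i i (1:ℝ) = (0 : Matrix (Fin d) (Fin d) ℝ) :=
    Matrix.single_mul_single_of_ne _ _ _ _ hij.symm _
  have z2 : Matrix.single i j (1:ℝ) * Matrix.single i j (1:ℝ) = (0 : Matrix (Fin d) (Fin d) ℝ) :=
    Matrix.single_mul_single_of_ne _ _ _ _ hij.symm _
  have z3 : Matrix.single j i (1:ℝ) * Matrix.single j j (1:ℝ) = (0 : Matrix (Fin d) (Fin d) ℝ) :=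
    Matrix.single_mul_single_of_ne _ _ _ _ hij _
  have z4 : Matrix.single j i (1:ℝ) * Matrix.single j i (1:ℝ) = (0 : Matrix (Fin d) (Fin d) ℝ) :=
    Matrix.single_mul_single_of_ne _ _ _ _ hij _
  simp only [Matrix.mul_add, Matrix.add_mul, Matrix.mul_one, Matrix.one_mul,
    mul_smul_comm, smul_mul_assoc, g1, g2, g3, g4, z1, z2, z3, z4, smul_zero, add_zero]
  match_scalars <;> field_simp <;> ring

lemma dot_update {d : ℕ} (x : Fin d → ℝ) (a : Fin d) (v : ℝ) :
    x ⬝ᵥ Function.update (0 : Fin d → ℝ) a v = x a * v := by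
  rw [show Function.update (0 : Fin d → ℝ) a v = Pi.single a v from rfl, dotProduct_single]

lemma sigmaM_quadform {d : ℕ} {σ : ℝ} {i j : Fin d} (hij : i ≠ j) (hσ : 1 - σ^2 ≠ 0)
    (x : Fin d → ℝ) :
    x ⬝ᵥ (SigmaM d σ {i, j})⁻¹.mulVec x =
      (∑ l, x l ^ 2) + (σ^2/(1-σ^2)) * (x i ^ 2 + x j ^ 2)
        + 2 * (-σ/(1-σ^2)) * (x i * x j) := by
  rw [sigmaM_inv hij hσ]
  simp only [Matrix.add_mulVec, Matrix.smul_mulVec, Matrix.one_mulVec,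
    Matrix.single_mulVec, one_mul, dotProduct_add, dotProduct_smul]
  rw [dot_update, dot_update, dot_update, dot_update]
  have : x ⬝ᵥ x = ∑ l, x l ^ 2 := by
    simp [dotProduct, sq]
  rw [this]
  simp only [smul_eq_mul]
  ring

/-- The two-variable kernel `η_{I,σ}/η₀` as a function of the two relevant coordinates. -/
def Kf (σ u v : ℝ) : ℝ :=
  (1 - σ^2) ^ (-(1:ℝ)/2) *
    Real.exp (-((σ^2/(1-σ^2)) * (u^2 + v^2) + 2*(-σ/(1-σ^2))*(u*v)) / 2)

lemma ratio_eq {d : ℕ} {σ : ℝ} {i j : Fin d} (hij : i ≠ j) (h1 : (0:ℝ) < 1 - σ^2)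
    (x : Fin d → ℝ) :
    gdens d (SigmaM d σ {i, j}) x / g0dens d x = Kf σ (x i) (x j) := by
  unfold gdens g0dens Kf
  rw [sigmaM_det hij, sigmaM_quadform hij h1.ne']
  have hA : (2*Real.pi) ^ (-(d:ℝ)/2) ≠ 0 :=
    (Real.rpow_pos_of_pos (by positivity) _).ne'
  have hE : Real.exp (-(∑ l, x l ^ 2)/2) ≠ 0 := Real.exp_ne_zero _
  rw [show -((∑ l, x l ^ 2) + (σ^2/(1-σ^2)) * (x i ^ 2 + x j ^ 2)
        + 2 * (-σ/(1-σ^2)) * (x i * x j)) / 2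
      = -(∑ l, x l ^ 2)/2 +
        (-((σ^2/(1-σ^2)) * (x i ^ 2 + x j ^ 2) + 2*(-σ/(1-σ^2))*(x i * x j)) / 2) by ring,
    Real.exp_add]
  field_simp

lemma gauss_int : (∫ u : ℝ, Real.exp (-u^2/2)) = Real.sqrt (2 * Real.pi) := by
  have : (fun u : ℝ => Real.exp (-u^2/2)) = fun u : ℝ => Real.exp (-(1/2) * u^2) := by
    funext u; ring_nf
  rw [this, integral_gaussian]
  rw [show Real.pi / (1/2) = 2 * Real.pi by ring]

lemma gauss_integrable : Integrable (fun u : ℝ => Real.exp (-u^2/2)) := by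
  have : (fun u : ℝ => Real.exp (-u^2/2)) = fun u : ℝ => Real.exp (-(1/2) * u^2) := by
    funext u; ring_nf
  rw [this]
  exact integrable_exp_neg_mul_sq (by norm_num)

lemma key_expand {σ : ℝ} (h1 : (0:ℝ) < 1 - σ^2) (v u : ℝ) :
    Real.exp (-u^2/2) * Kf σ u v
      = (1 - σ^2) ^ (-(1:ℝ)/2) * Real.exp (-(1/(2*(1-σ^2))) * (u - σ*v)^2) := by
  unfold Kf
  rw [mul_left_comm, ← Real.exp_add]
  congr 1
  field_simp
  ring

lemma key_integral {σ : ℝ} (h1 : (0:ℝ) < 1 - σ^2) (v : ℝ) :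
    (∫ u : ℝ, Real.exp (-u^2/2) * (Kf σ u v - 1)) = 0 := by
  have hb : (0:ℝ) < 1/(2*(1-σ^2)) := by positivity
  have hint2 : Integrable (fun u : ℝ => Real.exp (-u^2/2) * Kf σ u v) := by
    simp only [key_expand h1 v]
    exact ((integrable_exp_neg_mul_sq hb).comp_sub_right (σ*v)).const_mul _
  have h2 : (∫ u : ℝ, Real.exp (-u^2/2) * Kf σ u v) = Real.sqrt (2 * Real.pi) := by
    simp only [key_expand h1 v]
    rw [MeasureTheory.integral_const_mul]
    rw [integral_sub_right_eq_self (μ := volume)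
      (fun u : ℝ => Real.exp (-(1/(2*(1-σ^2))) * u^2)) (σ*v)]
    rw [integral_gaussian]
    rw [show Real.pi / (1/(2*(1-σ^2))) = 2 * Real.pi * (1-σ^2) by field_simp]
    rw [Real.sqrt_mul (by positivity), Real.sqrt_eq_rpow (1-σ^2),
      show -(1:ℝ)/2 = -(1/2) by norm_num, Real.rpow_neg h1.le]
    field_simp
  have hsplit : (fun u : ℝ => Real.exp (-u^2/2) * (Kf σ u v - 1))
      = fun u : ℝ => Real.exp (-u^2/2) * Kf σ u v - Real.exp (-u^2/2) := by
    funext u; ring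
  rw [hsplit, integral_sub hint2 gauss_integrable, h2, gauss_int, sub_self]

/-- with `b = 5`: for distinct two-element subsets `I_1,…,I_r` of `[d]`
such that some `j ∈ I_r` belongs to none of `I_1,…,I_{r−1}`,
`∫ η₀(x) ∏_i (η_{I_i,σ}(x)/η₀(x) − 1) dx = 0`. -/
theorem statement17 (d : ℕ) (hd : 3 ≤ d) (σ : ℝ) (hσ0 : 0 < σ) (hσ1 : σ < 1)
    (hσb : 4 * 5^2 * σ / (1 - σ^2) ≤ 1/2)
    (r : ℕ) (hr2 : 2 ≤ r) (hrb : r ≤ 5)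
    (I : Fin r → Finset (Fin d)) (hcard : ∀ i, (I i).card = 2)
    (hinj : Function.Injective I)
    (hlast : ∃ jj : Fin d, jj ∈ I ⟨r - 1, by omega⟩ ∧
      ∀ i : Fin r, (i : ℕ) < r - 1 → jj ∉ I i) :
    (∫ x : Fin d → ℝ,
        g0dens d x * ∏ i, (gdens d (SigmaM d σ (I i)) x / g0dens d x - 1)) = 0 := by
  classical
  obtain ⟨m, rfl⟩ : ∃ m, d = m + 1 := ⟨d - 1, by omega⟩
  obtain ⟨jj, hjjmem, hjjnot⟩ := hlast
  set last : Fin r := ⟨r - 1, by omega⟩ with hlastdef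
  have hσ2 : (0:ℝ) < 1 - σ^2 := by nlinarith
  obtain ⟨kk, hkkne, hIl⟩ : ∃ kk, kk ≠ jj ∧ I last = {jj, kk} := by
    obtain ⟨a, b, hab, hIlast⟩ := Finset.card_eq_two.mp (hcard last)
    rcases Finset.mem_insert.mp (hIlast ▸ hjjmem) with h | h
    · exact ⟨b, fun hb => hab (h ▸ hb ▸ rfl), by rw [hIlast, ← h]⟩
    · rw [Finset.mem_singleton] at h
      exact ⟨a, fun ha => hab (ha ▸ h ▸ rfl), by rw [hIlast, ← h, Finset.pair_comm]⟩
  set F : (Fin (m+1) → ℝ) → ℝ :=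
    fun x => g0dens (m+1) x * ∏ i, (gdens (m+1) (SigmaM (m+1) σ (I i)) x / g0dens (m+1) x - 1)
    with hF
  by_cases hInt : Integrable F volume
  case neg => exact integral_undef hInt
  set e := MeasurableEquiv.piFinSuccAbove (fun _ : Fin (m+1) => ℝ) jj with he
  have MPe := volume_preserving_piFinSuccAbove (fun _ : Fin (m+1) => ℝ) jj
  have hes : ∀ (u : ℝ) (y : Fin m → ℝ), e.symm (u, y) = jj.insertNth u y := fun u y => rfl
  have hswap := (MPe.symm e).integral_comp' F
  rw [← hswap]
  have hI2 := ((MPe.symm e).integrable_comp_emb e.symm.measurableEmbedding).mpr hInt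
  rw [Measure.volume_eq_prod] at hI2
  have h3 := MeasureTheory.integral_prod_symm (fun z : ℝ × (Fin m → ℝ) => F (e.symm z)) hI2
  rw [Measure.volume_eq_prod ℝ (Fin m → ℝ), h3]
  have hinner : ∀ y : Fin m → ℝ, (∫ u : ℝ, F (e.symm (u, y))) = 0 := by
    intro y
    set w : Fin (m+1) → ℝ := jj.insertNth 0 y with hw
    have hwne : ∀ (u : ℝ) (l : Fin (m+1)), l ≠ jj → (jj.insertNth u y : Fin (m+1) → ℝ) l = w l := by
      intro u l hl
      obtain ⟨t, rfl⟩ := Fin.exists_succAbove_eq hl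
      rw [hw, Fin.insertNth_apply_succAbove, Fin.insertNth_apply_succAbove]
    set C : ℝ := (2*Real.pi) ^ (-((m:ℝ)+1)/2) *
        Real.exp (-(∑ l ∈ Finset.univ.erase jj, w l ^ 2)/2) *
        ∏ i ∈ Finset.univ.erase last,
          (gdens (m+1) (SigmaM (m+1) σ (I i)) w / g0dens (m+1) w - 1) with hC
    have hpt : ∀ u : ℝ, F (e.symm (u, y))
        = C * (Real.exp (-u^2/2) * (Kf σ u (w kk) - 1)) := by
      intro u
      rw [hes u y]
      set z : Fin (m+1) → ℝ := jj.insertNth u y with hz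
      have hzjj : z jj = u := by rw [hz]; exact Fin.insertNth_apply_same (α := fun _ => ℝ) jj u y
      have hzw : ∀ l : Fin (m+1), l ≠ jj → z l = w l := fun l hl => hwne u l hl
      have hg0 : g0dens (m+1) z = (2*Real.pi) ^ (-((m:ℝ)+1)/2) *
          (Real.exp (-u^2/2) * Real.exp (-(∑ l ∈ Finset.univ.erase jj, w l ^ 2)/2)) := by
        unfold g0dens
        rw [← Finset.add_sum_erase _ _ (Finset.mem_univ jj), hzjj]
        rw [Finset.sum_congr rfl fun l hl => by
          rw [hzw l (Finset.mem_erase.mp hl).1]]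
        rw [show -(u ^ 2 + ∑ l ∈ Finset.univ.erase jj, w l ^ 2)/2
            = -u^2/2 + (-(∑ l ∈ Finset.univ.erase jj, w l ^ 2)/2) by ring, Real.exp_add]
        rw [show -((m:ℝ)+1)/2 = -(((m+1:ℕ)):ℝ)/2 by push_cast; ring]
      have hprod : (∏ i, (gdens (m+1) (SigmaM (m+1) σ (I i)) z / g0dens (m+1) z - 1))
          = (∏ i ∈ Finset.univ.erase last,
              (gdens (m+1) (SigmaM (m+1) σ (I i)) w / g0dens (m+1) w - 1))
            * (Kf σ u (w kk) - 1) := by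
        rw [← Finset.prod_erase_mul _ _ (Finset.mem_univ last)]
        congr 1
        · apply Finset.prod_congr rfl
          intro i hi
          have hine : i ≠ last := (Finset.mem_erase.mp hi).1
          have hilt : (i : ℕ) < r - 1 := by
            have h1 := i.isLt
            have h2 : (i : ℕ) ≠ r - 1 := fun h => hine (Fin.ext h)
            omega
          have hjnotin := hjjnot i hilt
          obtain ⟨a, b, hab, hIi⟩ := Finset.card_eq_two.mp (hcard i)
          have ha : a ≠ jj := fun h => hjnotin (h ▸ hIi ▸ Finset.mem_insert_self a {b})
          have hb : b ≠ jj := fun h =>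
            hjnotin (h ▸ hIi ▸ Finset.mem_insert_of_mem (Finset.mem_singleton_self b))
          rw [hIi, ratio_eq hab hσ2, ratio_eq hab hσ2, hzw a ha, hzw b hb]
        · rw [hIl, ratio_eq (fun h => hkkne h.symm) hσ2, hzjj, hzw kk hkkne]
      rw [hF]
      simp only
      rw [hprod, hg0, hC]
      ring
    simp only [hpt]
    rw [MeasureTheory.integral_const_mul, key_integral hσ2, mul_zero]
  simp only [hinner, integral_zero]
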